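/- arXiv:2506.10838 — 8 statements merged into one kernel-verified Lean document; each statement's English description precedes it below -/
import Mathlib

section
/- Let f, g be coprime integer polynomials of positive degree and let d = gcd(L(f), L(g)) where L denotes the leading coefficient. Then there exist integer polynomials p, q with deg(p) < deg(g), deg(q) < deg(f), d dividing every coefficient of p and of q, and p·f + q·g = |Res(f,g)|. -/
open Polynomial

/-- The Sylvester matrix of two integer polynomials. -/
noncomputable def sylvesterMatrix (f g : Polynomial ℤ) :
    Matrix (Fin (g.natDegree + f.natDegree)) (Fin (g.natDegree + f.natDegree)) ℤ :=
  Matrix.of fun i j =>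
    if (i : ℕ) < g.natDegree then
      if (i : ℕ) ≤ (j : ℕ) ∧ (j : ℕ) ≤ (i : ℕ) + f.natDegree then
        f.coeff (f.natDegree + i - j)
      else 0
    else
      if (i : ℕ) - g.natDegree ≤ (j : ℕ) ∧ (j : ℕ) ≤ (i : ℕ) - g.natDegree + g.natDegree then
        g.coeff (g.natDegree + ((i : ℕ) - g.natDegree) - j)
      else 0

/-- The resultant of two integer polynomials, as the determinant of their Sylvester matrix. -/
noncomputable def res (f g : Polynomial ℤ) : ℤ := (sylvesterMatrix f g).det


/-! Let `A` be the Sylvester matrix, of size `m + n` with `m = deg g`, `n = deg f`. Against the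
monomials `X ^ (m + n - 1 - j)`, its row `i < m` evaluates to `X ^ (m - 1 - i) * f` and its row
`m + i` to `X ^ (n - 1 - i) * g`. Since `adj A * A = det A • 1`, the last row of `adj A` combines
these rows into `det A • X ^ 0`, which yields `p`, `q` with the required degree bounds and
`p * f + q * g = Res f g`. The first column of `A` holds only `L(f)`, `L(g)` and zeros, so `d`
divides every cofactor of `A` whose minor keeps that column, in particular every entry of the last
row of `adj A`. Multiplying by the sign of `Res f g` turns it into `|Res f g|`. -/

namespace Matrix

variable {n R M : Type*} [Fintype n] [DecidableEq n] [CommRing R] [AddCommGroup M] [Module R M]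

theorem sum_adjugate_smul_sum_smul (A : Matrix n n R) (w : n → M) (k : n) :
    ∑ i, A.adjugate k i • ∑ j, A i j • w j = A.det • w k := by
  simp_rw [Finset.smul_sum, smul_smul]
  rw [Finset.sum_comm]
  simp_rw [← Finset.sum_smul, ← mul_apply, adjugate_mul, smul_apply, one_apply, smul_eq_mul,
    mul_ite, mul_one, mul_zero, ite_smul, zero_smul]
  simp

theorem dvd_det_of_dvd_col (A : Matrix n n R) {d : R} (j₀ : n) (h : ∀ i, d ∣ A i j₀) :
    d ∣ A.det := by
  choose c hc using h
  have hA : A = A.updateCol j₀ (d • c) := by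
    ext i j
    rcases eq_or_ne j j₀ with rfl | hj
    · simp [hc i]
    · simp [hj]
  rw [hA, det_updateCol_smul]
  exact dvd_mul_right _ _

theorem dvd_adjugate_apply_of_dvd_col (A : Matrix n n R) {d : R} {j₀ k : n} (hk : j₀ ≠ k)
    (h : ∀ i, d ∣ A i j₀) (i : n) : d ∣ A.adjugate k i := by
  rw [adjugate_apply]
  refine dvd_det_of_dvd_col _ j₀ fun r => ?_
  rw [updateRow_apply]
  split_ifs
  · simp [hk]
  · exact h r

end Matrix

namespace Polynomial

variable {R : Type*} [CommRing R]

def sylvesterRow (h : R[X]) (k j : ℕ) : R :=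
  if k ≤ j ∧ j ≤ k + h.natDegree then h.coeff (h.natDegree + k - j) else 0

theorem sum_sylvesterRow_smul_X_pow (h : R[X]) {N k s : ℕ} (hN : s + k + h.natDegree + 1 = N) :
    ∑ j : Fin N, sylvesterRow h k j • (X : R[X]) ^ (N - 1 - j) = X ^ s * h := by
  have hdeg : (X ^ s * h).natDegree < N := by
    have := natDegree_mul_le (p := (X : R[X]) ^ s) (q := h)
    have := natDegree_X_pow_le (R := R) s
    omega
  rw [Fin.sum_univ_eq_sum_range (fun j => sylvesterRow h k j • (X : R[X]) ^ (N - 1 - j)),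
    ← Finset.sum_range_reflect, as_sum_range' _ N hdeg]
  refine Finset.sum_congr rfl fun t ht => ?_
  rw [Finset.mem_range] at ht
  rw [← C_mul_X_pow_eq_monomial, smul_eq_C_mul, coeff_X_pow_mul', sylvesterRow,
    show N - 1 - (N - 1 - t) = t by omega]
  congr 2
  split_ifs with h₁ h₂ h₂
  · congr 1; omega
  · omega
  · exact (coeff_eq_zero_of_natDegree_lt (by omega)).symm
  · rfl

theorem leadingCoeff_dvd_sylvesterRow_zero (h : R[X]) (k : ℕ) :
    h.leadingCoeff ∣ sylvesterRow h k 0 := by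
  rw [sylvesterRow]
  split_ifs
  · rw [show h.natDegree + k - 0 = h.natDegree by omega]
    exact dvd_rfl
  · exact dvd_zero _

theorem degree_sum_smul_X_pow_sub_lt {m : ℕ} (a : Fin m → R) :
    (∑ i : Fin m, a i • (X : R[X]) ^ (m - 1 - i)).degree < m := by
  rw [← mem_degreeLT]
  refine Submodule.sum_mem _ fun i _ => Submodule.smul_mem _ _ (mem_degreeLT.2 ?_)
  exact (degree_X_pow_le _).trans_lt (by exact_mod_cast (by omega : m - 1 - i < m))

theorem C_dvd_sum_smul {ι : Type*} (s : Finset ι) {d : R} {a : ι → R}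
    (ha : ∀ i ∈ s, d ∣ a i) (p : ι → R[X]) : C d ∣ ∑ i ∈ s, a i • p i :=
  Finset.dvd_sum fun i hi => by
    rw [smul_eq_C_mul]; exact (_root_.map_dvd C (ha i hi)).mul_right _

end Polynomial

open Polynomial

section Sylvester

variable (f g : ℤ[X])

theorem sylvesterMatrix_castAdd (i : Fin g.natDegree) (j : Fin (g.natDegree + f.natDegree)) :
    sylvesterMatrix f g (Fin.castAdd f.natDegree i) j = sylvesterRow f i j := by
  simp only [sylvesterMatrix, sylvesterRow, Matrix.of_apply, Fin.val_castAdd, if_pos i.isLt]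

theorem sylvesterMatrix_natAdd (i : Fin f.natDegree) (j : Fin (g.natDegree + f.natDegree)) :
    sylvesterMatrix f g (Fin.natAdd g.natDegree i) j = sylvesterRow g i j := by
  simp only [sylvesterMatrix, sylvesterRow, Matrix.of_apply, Fin.val_natAdd,
    if_neg (Nat.not_lt.2 (Nat.le_add_right _ _)), Nat.add_sub_cancel_left]

theorem sylvesterMatrix_mul_add_mul (c : Fin (g.natDegree + f.natDegree) → ℤ) :
    (∑ i : Fin g.natDegree, c (Fin.castAdd _ i) • X ^ (g.natDegree - 1 - i)) * f +
      (∑ i : Fin f.natDegree, c (Fin.natAdd _ i) • X ^ (f.natDegree - 1 - i)) * g =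
      ∑ i, c i •
        ∑ j, sylvesterMatrix f g i j • X ^ (g.natDegree + f.natDegree - 1 - j) := by
  rw [Fin.sum_univ_add, Finset.sum_mul, Finset.sum_mul]
  simp_rw [sylvesterMatrix_castAdd, sylvesterMatrix_natAdd, smul_mul_assoc]
  congr 1 <;> refine Finset.sum_congr rfl fun i _ => ?_
  · rw [sum_sylvesterRow_smul_X_pow f (s := g.natDegree - 1 - i) (by omega)]
  · rw [sum_sylvesterRow_smul_X_pow g (s := f.natDegree - 1 - i) (by omega)]

theorem gcd_leadingCoeff_dvd_sylvesterMatrix_col_zero (hN : 0 < g.natDegree + f.natDegree)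
    (i : Fin (g.natDegree + f.natDegree)) :
    (Int.gcd f.leadingCoeff g.leadingCoeff : ℤ) ∣ sylvesterMatrix f g i ⟨0, hN⟩ := by
  induction i using Fin.addCases with
  | left i =>
    rw [sylvesterMatrix_castAdd]
    exact (Int.gcd_dvd_left _ _).trans (leadingCoeff_dvd_sylvesterRow_zero f i)
  | right i =>
    rw [sylvesterMatrix_natAdd]
    exact (Int.gcd_dvd_right _ _).trans (leadingCoeff_dvd_sylvesterRow_zero g i)

theorem exists_mul_add_mul_eq_C_res (hf : 0 < f.natDegree) (hg : 0 < g.natDegree) :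
    ∃ p q : ℤ[X], p.degree < g.degree ∧ q.degree < f.degree ∧
      C (Int.gcd f.leadingCoeff g.leadingCoeff : ℤ) ∣ p ∧
      C (Int.gcd f.leadingCoeff g.leadingCoeff : ℤ) ∣ q ∧ p * f + q * g = C (res f g) := by
  let last : Fin (g.natDegree + f.natDegree) := ⟨g.natDegree + f.natDegree - 1, by omega⟩
  set c := (sylvesterMatrix f g).adjugate last
  have hc : ∀ i, (Int.gcd f.leadingCoeff g.leadingCoeff : ℤ) ∣ c i :=
    (sylvesterMatrix f g).dvd_adjugate_apply_of_dvd_col (by simp [Fin.ext_iff, last]; omega)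
      (gcd_leadingCoeff_dvd_sylvesterMatrix_col_zero f g (by omega))
  refine ⟨∑ i : Fin g.natDegree, c (Fin.castAdd _ i) • X ^ (g.natDegree - 1 - i),
    ∑ i : Fin f.natDegree, c (Fin.natAdd _ i) • X ^ (f.natDegree - 1 - i), ?_, ?_,
    C_dvd_sum_smul _ (fun i _ => hc _) _, C_dvd_sum_smul _ (fun i _ => hc _) _, ?_⟩
  · rw [degree_eq_natDegree (ne_zero_of_natDegree_gt hg)]
    exact degree_sum_smul_X_pow_sub_lt _
  · rw [degree_eq_natDegree (ne_zero_of_natDegree_gt hf)]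
    exact degree_sum_smul_X_pow_sub_lt _
  rw [sylvesterMatrix_mul_add_mul, Matrix.sum_adjugate_smul_sum_smul]
  simp [last, res, smul_eq_C_mul]

end Sylvester

theorem statement_2_general (f g : Polynomial ℤ)
    (hf : 0 < f.natDegree) (hg : 0 < g.natDegree) :
    ∃ p q : Polynomial ℤ,
      p.degree < g.degree ∧ q.degree < f.degree ∧
      (∀ i : ℕ, (Int.gcd f.leadingCoeff g.leadingCoeff : ℤ) ∣ p.coeff i) ∧
      (∀ i : ℕ, (Int.gcd f.leadingCoeff g.leadingCoeff : ℤ) ∣ q.coeff i) ∧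
      p * f + q * g = Polynomial.C |res f g| := by
  obtain ⟨p, q, hp, hq, hdp, hdq, hpq⟩ := exists_mul_add_mul_eq_C_res f g hf hg
  set s := (res f g).sign
  refine ⟨s • p, s • q, (degree_smul_le _ _).trans_lt hp, (degree_smul_le _ _).trans_lt hq,
    fun i => ?_, fun i => ?_, ?_⟩
  · rw [coeff_smul, smul_eq_mul]; exact ((C_dvd_iff_dvd_coeff _ _).1 hdp i).mul_left s
  · rw [coeff_smul, smul_eq_mul]; exact ((C_dvd_iff_dvd_coeff _ _).1 hdq i).mul_left s
  · rw [smul_mul_assoc, smul_mul_assoc, ← smul_add, hpq, smul_eq_C_mul, ← C_mul,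
      Int.sign_mul_self_eq_abs]

theorem statement_2 (f g : Polynomial ℤ)
    (hf : 0 < f.natDegree) (hg : 0 < g.natDegree)
    (hcop : IsCoprime (f.map (Int.castRingHom ℚ)) (g.map (Int.castRingHom ℚ))) :
    ∃ p q : Polynomial ℤ,
      p.degree < g.degree ∧ q.degree < f.degree ∧
      (∀ i : ℕ, (Int.gcd f.leadingCoeff g.leadingCoeff : ℤ) ∣ p.coeff i) ∧
      (∀ i : ℕ, (Int.gcd f.leadingCoeff g.leadingCoeff : ℤ) ∣ q.coeff i) ∧
      p * f + q * g = Polynomial.C |res f g| :=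
  statement_2_general f g hf hg
end

section
/- If f and g are coprime integer polynomials of positive degree and d = gcd(L(f), L(g)), then d divides the resultant Res(f,g). -/
open Polynomial

theorem Matrix.dvd_det_of_forall_dvd_col {n R : Type*} [Fintype n] [DecidableEq n] [CommRing R]
    (A : Matrix n n R) (j : n) {d : R} (h : ∀ i, d ∣ A i j) : d ∣ A.det := by
  rw [Matrix.det_eq_sum_mul_adjugate_col A j]
  exact Finset.dvd_sum fun i _ => (h i).mul_right _

/-- The first column of the Sylvester matrix holds `f.leadingCoeff` (in row `0`, present only
when `g.natDegree > 0`) and `g.leadingCoeff` (in row `g.natDegree`), and zeros elsewhere. -/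
theorem dvd_sylvesterMatrix_of_col_eq_zero {f g : Polynomial ℤ} {d : ℤ}
    (hdf : d ∣ f.leadingCoeff) (hdg : d ∣ g.leadingCoeff)
    (i j : Fin (g.natDegree + f.natDegree)) (hj : (j : ℕ) = 0) : d ∣ sylvesterMatrix f g i j := by
  simp only [sylvesterMatrix, Matrix.of_apply, hj]
  split_ifs
  · rwa [show (i : ℕ) = 0 by omega, add_zero, Nat.sub_zero]
  · exact dvd_zero d
  · rwa [show (i : ℕ) = g.natDegree by omega, Nat.sub_self, add_zero, Nat.sub_zero]
  · exact dvd_zero d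

theorem statement_3_general (f g : Polynomial ℤ)
    (hf : 0 < f.natDegree) :
    (Int.gcd f.leadingCoeff g.leadingCoeff : ℤ) ∣ res f g :=
  Matrix.dvd_det_of_forall_dvd_col _ ⟨0, by omega⟩ fun i =>
    dvd_sylvesterMatrix_of_col_eq_zero (Int.gcd_dvd_left _ _) (Int.gcd_dvd_right _ _) i _ rfl

theorem statement_3 (f g : Polynomial ℤ)
    (hf : 0 < f.natDegree) (hg : 0 < g.natDegree)
    (hcop : IsCoprime (f.map (Int.castRingHom ℚ)) (g.map (Int.castRingHom ℚ))) :
    (Int.gcd f.leadingCoeff g.leadingCoeff : ℤ) ∣ res f g :=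
  statement_3_general f g hf
end

section
/- If f and g are coprime integer polynomials of positive degree, then r(f,g) divides B(f,g). -/
/-!
Multiplying the rational Bezout identity `p * f + q * g = 1` by `B` gives `B` as an integral
combination of `f` and `g`. The integers so represented form a subgroup of `ℤ`, which is
generated by its least positive element `r`.
-/

open Polynomial

/-- `B` is a positive common denominator for the (unique) Bezout cofactors `p, q` in `ℚ[x]`
with `deg p < deg g`, `deg q < deg f` and `p*f + q*g = 1`, i.e. `B*p, B*q` lie in `ℤ[x]`. -/
def IsBezoutDenom (f g : Polynomial ℤ) (B : ℤ) : Prop :=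
  0 < B ∧ ∃ p q : Polynomial ℚ,
    p.degree < (g.map (Int.castRingHom ℚ)).degree ∧
    q.degree < (f.map (Int.castRingHom ℚ)).degree ∧
    p * f.map (Int.castRingHom ℚ) + q * g.map (Int.castRingHom ℚ) = 1 ∧
    (∃ P : Polynomial ℤ, P.map (Int.castRingHom ℚ) = Polynomial.C (B : ℚ) * p) ∧
    (∃ Q : Polynomial ℤ, Q.map (Int.castRingHom ℚ) = Polynomial.C (B : ℚ) * q)

theorem Int.dvd_of_mem_of_isLeast_pos {H : AddSubgroup ℤ} {r : ℤ}
    (hr : IsLeast {s | s ∈ H ∧ 0 < s} r) {b : ℤ} (hb : b ∈ H) : r ∣ b := by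
  rw [AddSubgroup.cyclic_of_min hr, ← AddSubgroup.zmultiples_eq_closure] at hb
  exact Int.mem_zmultiples_iff.mp hb

theorem IsBezoutDenom.exists_int_combination_eq_C {f g : ℤ[X]} {B : ℤ}
    (hB : IsBezoutDenom f g B) :
    ∃ u v : ℤ[X], u * f + v * g = C B := by
  obtain ⟨-, p, q, -, -, hbez, ⟨P, hP⟩, ⟨Q, hQ⟩⟩ := hB
  refine ⟨P, Q, map_injective _ (Int.castRingHom ℚ).injective_int ?_⟩
  rw [Polynomial.map_add, Polynomial.map_mul, Polynomial.map_mul, hP, hQ, map_C,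
    eq_intCast, mul_assoc, mul_assoc, ← mul_add, hbez, mul_one]

theorem statement_4_general (f g : Polynomial ℤ)
    (r : ℤ) (hrpos : 0 < r)
    (hrmem : ∃ u v : Polynomial ℤ, u * f + v * g = Polynomial.C r)
    (hrmin : ∀ s : ℤ, 0 < s →
      (∃ u v : Polynomial ℤ, u * f + v * g = Polynomial.C s) → r ≤ s)
    (B : ℤ) (hB : IsBezoutDenom f g B) :
    r ∣ B := by
  let H : AddSubgroup ℤ := ((Ideal.span {f, g}).comap (C : ℤ →+* ℤ[X])).toAddSubgroup
  have mem_H (s : ℤ) : s ∈ H ↔ ∃ u v : ℤ[X], u * f + v * g = C s := Ideal.mem_span_pair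
  exact Int.dvd_of_mem_of_isLeast_pos
    ⟨⟨(mem_H r).2 hrmem, hrpos⟩, fun s hs => hrmin s hs.2 ((mem_H s).1 hs.1)⟩
    ((mem_H B).2 hB.exists_int_combination_eq_C)

theorem statement_4 (f g : Polynomial ℤ)
    (hf : 0 < f.natDegree) (hg : 0 < g.natDegree)
    (hcop : IsCoprime (f.map (Int.castRingHom ℚ)) (g.map (Int.castRingHom ℚ)))
    (r : ℤ) (hrpos : 0 < r)
    (hrmem : ∃ u v : Polynomial ℤ, u * f + v * g = Polynomial.C r)
    (hrmin : ∀ s : ℤ, 0 < s →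
      (∃ u v : Polynomial ℤ, u * f + v * g = Polynomial.C s) → r ≤ s)
    (B : ℤ) (hB : IsBezoutDenom f g B)
    (hBmin : ∀ B' : ℤ, IsBezoutDenom f g B' → B ≤ B') :
    r ∣ B :=
  statement_4_general f g r hrpos hrmem hrmin B hB
end

section
/- Let f and g be coprime integer polynomials of positive degree and let d = gcd(L(f), L(g)). Then there exists a non-negative integer k such that B(f,g) divides d^k · r(f,g). -/
open Polynomial

namespace Polynomial

variable {R K : Type*} [CommRing R] [IsDomain R]

theorem exists_C_leadingCoeff_pow_mul_eq_mul_add {g : R[X]} (hg : g ≠ 0) (u : R[X]) :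
    ∃ (m : ℕ) (s t : R[X]), C (g.leadingCoeff ^ m) * u = g * s + t ∧ t.degree < g.degree := by
  induction hu : u.degree using WellFoundedLT.induction generalizing u with
  | _ n ih =>
  subst hu
  obtain hlt | hle := lt_or_ge u.degree g.degree
  · exact ⟨0, 0, u, by simp, hlt⟩
  have hu0 : u ≠ 0 := by rintro rfl; simp_all
  set b := g.leadingCoeff
  set e := u.natDegree - g.natDegree
  set w := C u.leadingCoeff * X ^ e * g
  have hb : b ≠ 0 := leadingCoeff_ne_zero.mpr hg
  have hw : w.degree = u.degree := by
    have := natDegree_le_natDegree hle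
    rw [degree_mul, degree_C_mul_X_pow _ (leadingCoeff_ne_zero.mpr hu0),
      degree_eq_natDegree hg, degree_eq_natDegree hu0]
    norm_cast; omega
  have hlc : (C b * u).leadingCoeff = w.leadingCoeff := by
    simp only [w, leadingCoeff_mul, leadingCoeff_C, leadingCoeff_X_pow, b]; ring
  have hlt' : (C b * u - w).degree < u.degree := by
    have := degree_sub_lt_left (by rw [degree_C_mul hb, hw]) (mul_ne_zero (C_ne_zero.mpr hb) hu0) hlc
    rwa [degree_C_mul hb] at this
  obtain ⟨m, s, t, hst, ht⟩ := ih _ hlt' _ rfl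
  refine ⟨m + 1, s + C (b ^ m * u.leadingCoeff) * X ^ e, t, ?_, ht⟩
  simp only [pow_succ, C_mul, C_pow] at hst ⊢
  linear_combination hst

def denominatorIdeal {S : Type*} [CommRing S] (φ : R →+* S) (h : S[X]) : Ideal R where
  carrier := {a | C (φ a) * h ∈ lifts φ}
  zero_mem' := by simp [zero_mem]
  add_mem' {a b} (ha : _ ∈ lifts φ) (hb : _ ∈ lifts φ) := by
    simpa only [Set.mem_ofPred_eq, map_add, C_add, add_mul] using add_mem ha hb
  smul_mem' c a (ha : _ ∈ lifts φ) := by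
    simpa only [Set.mem_ofPred_eq, smul_eq_mul, map_mul, C_mul, mul_assoc] using
      mul_mem (C_mem_lifts φ c) ha

variable [Field K] {φ : R →+* K}

theorem exists_leadingCoeff_pow_mul_mem_denominatorIdeal (hφ : Function.Injective φ)
    {f g u v : R[X]} {r : R} (huv : u * f + v * g = C r) {p q : K[X]}
    (hpq : p * f.map φ + q * g.map φ = 1) (hp : p.degree < (g.map φ).degree) :
    ∃ m, g.leadingCoeff ^ m * r ∈ denominatorIdeal φ p ⊓ denominatorIdeal φ q := by
  have hg : g ≠ 0 := by rintro rfl; simp at hp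
  obtain ⟨m, s, t, hst, ht⟩ := exists_C_leadingCoeff_pow_mul_eq_mul_add hg u
  have huv' := congrArg (map φ) huv
  have hst' := congrArg (map φ) hst
  simp only [Polynomial.map_add, Polynomial.map_mul, map_C] at huv' hst'
  set y := C (φ (g.leadingCoeff ^ m)) * v.map φ + s.map φ * f.map φ -
    C (φ (g.leadingCoeff ^ m * r)) * q
  have hx : (C (φ (g.leadingCoeff ^ m * r)) * p - t.map φ) * f.map φ = g.map φ * y := by
    simp only [y, map_mul]
    linear_combination (C (φ (g.leadingCoeff ^ m)) * C (φ r)) * hpq -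
      C (φ (g.leadingCoeff ^ m)) * huv' + f.map φ * hst'
  have hx0 : C (φ (g.leadingCoeff ^ m * r)) * p - t.map φ = 0 := by
    refine eq_zero_of_dvd_of_degree_lt (p := g.map φ) ?_ ?_
    · exact IsCoprime.dvd_of_dvd_mul_right ⟨q, p, by linear_combination hpq⟩ ⟨y, hx⟩
    · refine (degree_sub_le _ _).trans_lt (max_lt ?_ ?_)
      · rw [← smul_eq_C_mul]
        exact (degree_smul_le _ p).trans_lt hp
      · rwa [degree_map_eq_of_injective hφ, degree_map_eq_of_injective hφ]
  have hy0 : y = 0 := by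
    rw [hx0, zero_mul, eq_comm, mul_eq_zero] at hx
    exact hx.resolve_left (Polynomial.map_ne_zero_iff hφ |>.mpr hg)
  refine ⟨m, ⟨t, (sub_eq_zero.mp hx0).symm⟩, ⟨C (g.leadingCoeff ^ m) * v + s * f, ?_⟩⟩
  simp only [coe_mapRingHom, Polynomial.map_add, Polynomial.map_mul, map_C]
  linear_combination hy0

end Polynomial

theorem Int.dvd_of_mem_of_forall_le {I : Ideal ℤ} {B N : ℤ} (hB : B ∈ I) (hBpos : 0 < B)
    (hmin : ∀ x ∈ I, 0 < x → B ≤ x) (hN : N ∈ I) : B ∣ N := by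
  have hmod : N % B ∈ I := by
    rw [Int.emod_def]
    exact I.sub_mem hN (I.mul_mem_right _ hB)
  refine Int.dvd_of_emod_eq_zero ((Int.emod_nonneg N hBpos.ne').eq_of_not_lt fun hpos => ?_).symm
  exact (hmin _ hmod hpos).not_gt (Int.emod_lt_of_pos N hBpos)

theorem Int.dvd_gcd_pow_mul {B a b r : ℤ} {m n : ℕ} (ha : B ∣ a ^ m * r) (hb : B ∣ b ^ n * r) :
    B ∣ (Int.gcd a b : ℤ) ^ (m * n) * r := by
  have hgcd : B ∣ (Int.gcd (a ^ m) (b ^ n) : ℤ) * r := by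
    rw [Int.gcd_eq_gcd_ab, add_mul, mul_right_comm, mul_right_comm (b ^ n)]
    exact dvd_add (ha.mul_right _) (hb.mul_right _)
  refine hgcd.trans (mul_dvd_mul_right ?_ r)
  rw [Int.coe_gcd, Int.coe_gcd, pow_mul']
  exact gcd_pow_left_dvd_pow_gcd.trans (pow_dvd_pow_of_dvd gcd_pow_right_dvd_pow_gcd m)

theorem statement_7_general (f g : Polynomial ℤ)
    (r : ℤ)
    (hrmem : ∃ u v : Polynomial ℤ, u * f + v * g = Polynomial.C r)
    (B : ℤ) (hB : IsBezoutDenom f g B)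
    (hBmin : ∀ B' : ℤ, IsBezoutDenom f g B' → B ≤ B') :
    ∃ k : ℕ, B ∣ (Int.gcd f.leadingCoeff g.leadingCoeff : ℤ) ^ k * r := by
  obtain ⟨hBpos, p, q, hp, hq, hpq, hBp, hBq⟩ := hB
  obtain ⟨u, v, huv⟩ := hrmem
  have hinj : Function.Injective (Int.castRingHom ℚ) := Int.cast_injective
  have hdvd : ∀ N ∈ denominatorIdeal (Int.castRingHom ℚ) p ⊓
      denominatorIdeal (Int.castRingHom ℚ) q, B ∣ N := fun N =>
    Int.dvd_of_mem_of_forall_le ⟨hBp, hBq⟩ hBpos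
      fun B' ⟨hp', hq'⟩ hpos => hBmin B' ⟨hpos, p, q, hp, hq, hpq, hp', hq'⟩
  obtain ⟨m, hm⟩ := exists_leadingCoeff_pow_mul_mem_denominatorIdeal hinj huv hpq hp
  obtain ⟨n, hn⟩ := exists_leadingCoeff_pow_mul_mem_denominatorIdeal hinj
    (by linear_combination huv : v * g + u * f = C r)
    (by linear_combination hpq : q * g.map (Int.castRingHom ℚ) + p * f.map (Int.castRingHom ℚ) = 1) hq
  exact ⟨n * m, Int.dvd_gcd_pow_mul (hdvd _ ⟨hn.2, hn.1⟩) (hdvd _ hm)⟩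

theorem statement_7 (f g : Polynomial ℤ)
    (hf : 0 < f.natDegree) (hg : 0 < g.natDegree)
    (hcop : IsCoprime (f.map (Int.castRingHom ℚ)) (g.map (Int.castRingHom ℚ)))
    (r : ℤ) (hrpos : 0 < r)
    (hrmem : ∃ u v : Polynomial ℤ, u * f + v * g = Polynomial.C r)
    (hrmin : ∀ s : ℤ, 0 < s →
      (∃ u v : Polynomial ℤ, u * f + v * g = Polynomial.C s) → r ≤ s)
    (B : ℤ) (hB : IsBezoutDenom f g B)
    (hBmin : ∀ B' : ℤ, IsBezoutDenom f g B' → B ≤ B') :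
    ∃ k : ℕ, B ∣ (Int.gcd f.leadingCoeff g.leadingCoeff : ℤ) ^ k * r :=
  statement_7_general f g r hrmem B hB hBmin
end

section
/- Let f and g be coprime integer polynomials of positive degree with deg(f) = m and deg(g) = n, and let d = gcd(L(f), L(g)). Then |Res(f,g)| divides d^j · r(f,g)^{max(m,n)} for some non-negative integer j. -/
/-!
If `f a + g b = r`, multiplicativity of the resultant and its invariance under `g ↦ g + f p` give
`Res(f, g) · Res(f, b) = Res(f, g b + f a) = Res(f, r) = L(f)^N · r^(deg f)`, and symmetrically
`Res(g, f) ∣ L(g)^M · r^(deg g)`. As `|Res(f, g)| = |Res(g, f)|`, it divides the gcd of these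
two numbers, which divides `d^j · r^max(deg f, deg g)`.
-/

open Polynomial

open Matrix

theorem dvd_gcd_pow_mul_pow_max {α : Type*} [CommMonoidWithZero α] [GCDMonoid α]
    {D x y r : α} {s t a b : ℕ} (hx : D ∣ x ^ s * r ^ a) (hy : D ∣ y ^ t * r ^ b) :
    D ∣ gcd x y ^ (t * s) * r ^ max a b := by
  have hx' : D ∣ x ^ s * r ^ max a b :=
    hx.trans (mul_dvd_mul_left _ (pow_dvd_pow _ (le_max_left a b)))
  have hy' : D ∣ y ^ t * r ^ max a b :=
    hy.trans (mul_dvd_mul_left _ (pow_dvd_pow _ (le_max_right a b)))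
  calc D ∣ gcd (x ^ s * r ^ max a b) (y ^ t * r ^ max a b) := dvd_gcd hx' hy'
    _ ∣ gcd (x ^ s) (y ^ t) * r ^ max a b := (gcd_mul_right' _ _ _).dvd
    _ ∣ gcd x y ^ (t * s) * r ^ max a b := by
      refine mul_dvd_mul_right ((gcd_pow_left_dvd_pow_gcd (b := y ^ t)).trans ?_) _
      rw [pow_mul]
      exact pow_dvd_pow_of_dvd (gcd_pow_right_dvd_pow_gcd (a := x)) s

theorem resultant_dvd_leadingCoeff_pow_mul_pow {R : Type*} [CommRing R] [IsDomain R]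
    {f g a b : R[X]} {r : R} (h : f * a + g * b = C r) :
    ∃ n, resultant f g ∣ f.leadingCoeff ^ n * r ^ f.natDegree := by
  refine ⟨b.natDegree + g.natDegree, Dvd.intro (resultant f b) ?_⟩
  have hshift : resultant f (g * b + f * a) f.natDegree (g.natDegree + b.natDegree)
      = resultant f (g * b) f.natDegree (g.natDegree + b.natDegree) := by
    by_cases hfa : f * a = 0
    · rw [hfa, add_zero]
    refine resultant_add_mul_right _ _ _ _ _ ?_ le_rfl
    calc a.natDegree + f.natDegree = (f * a).natDegree := by
          rw [natDegree_mul (left_ne_zero_of_mul hfa) (right_ne_zero_of_mul hfa), add_comm]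
      _ = (C r - g * b).natDegree := by rw [← h, add_sub_cancel_right]
      _ ≤ g.natDegree + b.natDegree :=
          (natDegree_sub_le _ _).trans (by simpa using natDegree_mul_le)
  rw [← resultant_mul_right _ _ _ _ le_rfl, ← hshift, add_comm (g * b), h, resultant_C_right,
    coeff_natDegree, add_comm]

theorem abs_resultant_comm {R : Type*} [CommRing R] [LinearOrder R] [IsStrictOrderedRing R]
    (f g : R[X]) : |resultant f g| = |resultant g f| := by
  rw [resultant_comm, abs_mul, abs_pow, abs_neg, abs_one, one_pow, one_mul]

def Fin.revBlocks (m n : ℕ) : Equiv.Perm (Fin (m + n)) :=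
  finSumFinEquiv.symm.trans ((Equiv.sumCongr Fin.revPerm Fin.revPerm).trans finSumFinEquiv)

theorem sylvesterMatrix_eq_submatrix_transpose_sylvester (f g : ℤ[X]) :
    sylvesterMatrix f g = (sylvester g f g.natDegree f.natDegree)ᵀ.submatrix
      (Fin.revBlocks _ _) Fin.revPerm := by
  ext i j
  induction i using Fin.addCases <;>
    simp [sylvesterMatrix, sylvester, Fin.revBlocks, -Fin.val_fin_le] <;>
    split_ifs <;> first | (congr 1; omega) | omega

theorem abs_res_eq_abs_resultant (f g : ℤ[X]) : |res f g| = |resultant g f| := by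
  rw [res, sylvesterMatrix_eq_submatrix_transpose_sylvester, abs_det_submatrix_equiv_equiv,
    det_transpose, resultant]

theorem statement_9_general (f g : Polynomial ℤ)
    (r : ℤ)
    (hrmem : ∃ u v : Polynomial ℤ, u * f + v * g = Polynomial.C r) :
    ∃ j : ℕ,
      |res f g| ∣ (Int.gcd f.leadingCoeff g.leadingCoeff : ℤ) ^ j * r ^ max f.natDegree g.natDegree := by
  obtain ⟨u, v, huv⟩ := hrmem
  obtain ⟨s, hfg⟩ := resultant_dvd_leadingCoeff_pow_mul_pow (f := f) (g := g) (a := u) (b := v)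
    (by linear_combination huv)
  obtain ⟨t, hgf⟩ := resultant_dvd_leadingCoeff_pow_mul_pow (f := g) (g := f) (a := v) (b := u)
    (by linear_combination huv)
  rw [← abs_dvd, abs_resultant_comm, ← abs_res_eq_abs_resultant] at hfg
  rw [← abs_dvd, ← abs_res_eq_abs_resultant] at hgf
  exact ⟨t * s, Int.coe_gcd _ _ ▸ dvd_gcd_pow_mul_pow_max hfg hgf⟩

theorem statement_9 (f g : Polynomial ℤ)
    (hf : 0 < f.natDegree) (hg : 0 < g.natDegree)
    (hcop : IsCoprime (f.map (Int.castRingHom ℚ)) (g.map (Int.castRingHom ℚ)))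
    (r : ℤ) (hrpos : 0 < r)
    (hrmem : ∃ u v : Polynomial ℤ, u * f + v * g = Polynomial.C r)
    (hrmin : ∀ s : ℤ, 0 < s →
      (∃ u v : Polynomial ℤ, u * f + v * g = Polynomial.C s) → r ≤ s) :
    ∃ j : ℕ,
      |res f g| ∣ (Int.gcd f.leadingCoeff g.leadingCoeff : ℤ) ^ j * r ^ max f.natDegree g.natDegree :=
  statement_9_general f g r hrmem
end

section
/- Let f and g be monic coprime integer polynomials of positive degree, with deg(f) = m and deg(g) = n. Then |Res(f,g)| divides r(f,g)^{min(m,n)}. -/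
open Polynomial

/-! If `u * f + v * g = r` with `f` monic, then `Res(f, ·)` is multiplicative and unchanged by
adding multiples of `f` of small enough degree, so
`Res(f, g) * Res(f, v) = Res(f, v * g) = Res(f, r - u * f) = Res(f, r) = r ^ deg f`.
Exchanging the roles of `f` and `g` gives `Res(g, f) ∣ r ^ deg g`, and `Res(f, g) = ±Res(g, f)`. -/

namespace Polynomial

variable {R : Type*} [CommRing R]

theorem sylvester_apply_eq_ite (f g : R[X]) (m n : ℕ) (i j : Fin (m + n)) :
    sylvester f g m n i j =
      if (j : ℕ) < m then
        if (j : ℕ) ≤ i ∧ (i : ℕ) ≤ j + n then g.coeff (i - j) else 0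
      else
        if (j : ℕ) - m ≤ i ∧ (i : ℕ) ≤ j - m + m then f.coeff (i - (j - m)) else 0 := by
  induction j using Fin.addCases <;> simp [sylvester]

theorem Monic.resultant_dvd_pow_of_mul_add_mul_eq_C {f g u v : R[X]} {r : R} (hf : f.Monic)
    (h : u * f + v * g = C r) : f.resultant g ∣ r ^ f.natDegree := by
  have hvg : f.resultant (v * g) f.natDegree (v.natDegree + g.natDegree) =
      f.resultant (C r) f.natDegree (v.natDegree + g.natDegree) := by
    rcases eq_or_ne u 0 with rfl | hu
    · rw [← h, zero_mul, zero_add]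
    have hdeg : (-u).natDegree + f.natDegree ≤ v.natDegree + g.natDegree := by
      have : (f * u).natDegree ≤ v.natDegree + g.natDegree := by
        rw [show f * u = C r - v * g by rw [← h]; ring]
        exact (natDegree_sub_le _ _).trans (max_le (by simp) natDegree_mul_le)
      rwa [natDegree_neg, add_comm, ← hf.natDegree_mul' hu]
    rw [show v * g = C r + f * -u by rw [← h]; ring, resultant_add_mul_right _ _ _ _ _ hdeg le_rfl]
  rw [resultant_mul_right _ _ _ _ le_rfl, resultant_C_right, hf.coeff_natDegree, one_pow,
    one_mul] at hvg
  exact Dvd.intro_left _ hvg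

theorem resultant_dvd_pow_min_of_mul_add_mul_eq_C {f g u v : R[X]} {r : R} (hf : f.Monic)
    (hg : g.Monic) (h : u * f + v * g = C r) :
    f.resultant g ∣ r ^ min f.natDegree g.natDegree := by
  rcases le_total f.natDegree g.natDegree with hle | hle
  · rw [min_eq_left hle]
    exact hf.resultant_dvd_pow_of_mul_add_mul_eq_C h
  · rw [min_eq_right hle, resultant_comm, (isUnit_neg_one.pow _).mul_left_dvd]
    exact hg.resultant_dvd_pow_of_mul_add_mul_eq_C (by rw [← h]; ring : v * g + u * f = C r)

end Polynomial

theorem res_eq_resultant (f g : ℤ[X]) : res f g = f.resultant g := by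
  -- `sylvesterMatrix f g` is Mathlib's Sylvester matrix, transposed, with rows and columns reversed.
  let e : Fin (g.natDegree + f.natDegree) ≃ Fin (f.natDegree + g.natDegree) :=
    (finCongr (add_comm _ _)).trans Fin.revPerm
  have hmat : sylvesterMatrix f g = (sylvester f g f.natDegree g.natDegree).transpose.submatrix e e := by
    ext i j
    have hi := i.isLt
    have hj := j.isLt
    simp only [sylvesterMatrix, Matrix.of_apply, Matrix.submatrix_apply, Matrix.transpose_apply,
      sylvester_apply_eq_ite, e, Equiv.trans_apply, finCongr_apply, Fin.revPerm_apply, Fin.val_rev,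
      Fin.val_cast]
    split_ifs <;> first | rfl | omega | (congr 1; omega)
  rw [res, hmat, Matrix.det_submatrix_equiv_self, Matrix.det_transpose, resultant]

theorem statement_10_general (f g : Polynomial ℤ)
    (hfm : f.Monic) (hgm : g.Monic)
    (r : ℤ)
    (hrmem : ∃ u v : Polynomial ℤ, u * f + v * g = Polynomial.C r) :
    |res f g| ∣ r ^ min f.natDegree g.natDegree := by
  obtain ⟨u, v, huv⟩ := hrmem
  rw [abs_dvd, res_eq_resultant]
  exact resultant_dvd_pow_min_of_mul_add_mul_eq_C hfm hgm huv

theorem statement_10 (f g : Polynomial ℤ)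
    (hf : 0 < f.natDegree) (hg : 0 < g.natDegree)
    (hcop : IsCoprime (f.map (Int.castRingHom ℚ)) (g.map (Int.castRingHom ℚ)))
    (hfm : f.Monic) (hgm : g.Monic)
    (r : ℤ) (hrpos : 0 < r)
    (hrmem : ∃ u v : Polynomial ℤ, u * f + v * g = Polynomial.C r)
    (hrmin : ∀ s : ℤ, 0 < s →
      (∃ u v : Polynomial ℤ, u * f + v * g = Polynomial.C s) → r ≤ s) :
    |res f g| ∣ r ^ min f.natDegree g.natDegree :=
  statement_10_general f g hfm hgm r hrmem
end

section
/- Let f and g be coprime integer polynomials of positive degree with f monic and deg(f) = m. Then |Res(f,g)| divides r(f,g)^m. -/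
open Polynomial

theorem resultant_dvd_pow_of_mul_add_mul_eq_C {R : Type*} [CommRing R] {f g u v : R[X]} {r : R}
    (hf : f.Monic) (h : u * f + v * g = C r) : f.resultant g ∣ r ^ f.natDegree := by
  set m := f.natDegree
  set N := v.natDegree + g.natDegree
  have hvg : v * g = C r + f * -u := by rw [← h]; ring
  -- The degree bound is padded so that `f * -u` fits; this is free because `f` is monic.
  have hpad : f.resultant (v * g) m (N + (u.natDegree + m)) = r ^ m := by
    rw [hvg, resultant_add_mul_right _ _ _ _ _ (by rw [natDegree_neg]; omega) le_rfl,
      resultant_C_right, hf.coeff_natDegree, one_pow, one_mul]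
  rw [← hpad, resultant_add_right_deg _ _ _ _ _ natDegree_mul_le, hf.coeff_natDegree, one_pow,
    one_mul, resultant_mul_right _ _ _ _ le_rfl]
  exact dvd_mul_left _ _

theorem statement_11_general (f g : Polynomial ℤ)
    (hfm : f.Monic)
    (r : ℤ)
    (hrmem : ∃ u v : Polynomial ℤ, u * f + v * g = Polynomial.C r) :
    |res f g| ∣ r ^ f.natDegree := by
  obtain ⟨u, v, huv⟩ := hrmem
  rw [abs_dvd, res_eq_resultant]
  exact resultant_dvd_pow_of_mul_add_mul_eq_C hfm huv

theorem statement_11 (f g : Polynomial ℤ)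
    (hf : 0 < f.natDegree) (hg : 0 < g.natDegree)
    (hcop : IsCoprime (f.map (Int.castRingHom ℚ)) (g.map (Int.castRingHom ℚ)))
    (hfm : f.Monic)
    (r : ℤ) (hrpos : 0 < r)
    (hrmem : ∃ u v : Polynomial ℤ, u * f + v * g = Polynomial.C r)
    (hrmin : ∀ s : ℤ, 0 < s →
      (∃ u v : Polynomial ℤ, u * f + v * g = Polynomial.C s) → r ≤ s) :
    |res f g| ∣ r ^ f.natDegree :=
  statement_11_general f g hfm r hrmem
end

section
/- Let f(x) = a·x + b and g(x) = c·x + e be coprime integer polynomials of degree one (a ≠ 0, c ≠ 0, and a·e − b·c ≠ 0). Then |Res(f,g)| = |a·e − b·c| and B(f,g) = |a·e − b·c| / gcd(a,c); in particular, if gcd(a,c) = 1 then B(f,g) = |Res(f,g)|. -/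
/-! Over `ℚ` the Bezout cofactors of `a X + b` and `c X + e` are the constants `-c / D` and `a / D`,
where `D = a e - b c` is also the resultant. Hence `B` clears their denominators iff `D ∣ B c` and
`D ∣ B a`, i.e. iff `D ∣ B gcd(a, c)`, and the least positive such `B` is `|D| / gcd(a, c)`. -/

open Polynomial

theorem res_of_natDegree_eq_one {f g : ℤ[X]} (hf : f.natDegree = 1) (hg : g.natDegree = 1) :
    res f g = f.coeff 1 * g.coeff 0 - f.coeff 0 * g.coeff 1 := by
  have h2 : g.natDegree + f.natDegree = 2 := by rw [hf, hg]
  rw [res, ← Matrix.det_reindex_self (finCongr h2), Matrix.det_fin_two]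
  simp [sylvesterMatrix, hf, hg]

theorem linear_bezout_iff {K : Type*} [Field K] {a b c e : K} (hdet : a * e - b * c ≠ 0)
    (p q : K[X]) :
    (p.degree < 1 ∧ q.degree < 1 ∧ p * (C a * X + C b) + q * (C c * X + C e) = 1) ↔
      p = C (-c / (a * e - b * c)) ∧ q = C (a / (a * e - b * c)) := by
  constructor
  · rintro ⟨hp, hq, h⟩
    rw [eq_C_of_degree_le_zero (Nat.WithBot.lt_one_iff_le_zero.mp hp),
      eq_C_of_degree_le_zero (Nat.WithBot.lt_one_iff_le_zero.mp hq)] at h ⊢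
    have h1 : p.coeff 0 * a + q.coeff 0 * c = 0 := by simpa [coeff_one] using congrArg (coeff · 1) h
    have h0 : p.coeff 0 * b + q.coeff 0 * e = 1 := by simpa using congrArg (coeff · 0) h
    exact ⟨congrArg C ((eq_div_iff hdet).2 (by linear_combination e * h1 - c * h0)),
      congrArg C ((eq_div_iff hdet).2 (by linear_combination a * h0 - b * h1))⟩
  · rintro ⟨rfl, rfl⟩
    refine ⟨degree_C_le.trans_lt zero_lt_one, degree_C_le.trans_lt zero_lt_one, ?_⟩
    set D := a * e - b * c
    have h1 : -c / D * a + a / D * c = 0 := by ring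
    have h0 : -c / D * b + a / D * e = 1 := by field_simp; ring
    calc _ = C (-c / D * a + a / D * c) * X + C (-c / D * b + a / D * e) := by
          simp only [C_add, C_mul]; ring
      _ = 1 := by rw [h1, h0, C_0, zero_mul, zero_add, C_1]

theorem C_mem_lifts_iff {R S : Type*} [Semiring R] [Semiring S] {f : R →+* S} {s : S} :
    C s ∈ lifts f ↔ s ∈ Set.range f :=
  ⟨fun h => by simpa using (lifts_iff_coeff_lifts _).1 h 0, C'_mem_lifts⟩

theorem intCast_div_mem_range_iff {n D : ℤ} (hD : D ≠ 0) :
    (n / D : ℚ) ∈ Set.range (Int.castRingHom ℚ) ↔ D ∣ n := by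
  constructor
  · rintro ⟨k, hk⟩
    refine ⟨k, Int.cast_injective (α := ℚ) ?_⟩
    rw [eq_intCast, eq_div_iff (by exact_mod_cast hD)] at hk
    push_cast
    linear_combination -hk
  · rintro ⟨k, rfl⟩
    exact ⟨k, by simp [hD]⟩

theorem exists_map_eq_C_mul_C_div_iff {B n D : ℤ} (hD : D ≠ 0) :
    (∃ P : ℤ[X], P.map (Int.castRingHom ℚ) = C (B : ℚ) * C ((n : ℚ) / D)) ↔ D ∣ B * n := by
  rw [← C_mul, ← mem_lifts, C_mem_lifts_iff, ← intCast_div_mem_range_iff hD, Int.cast_mul,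
    mul_div_assoc]

theorem dvd_mul_gcd_iff {D B a c : ℤ} : D ∣ B * Int.gcd a c ↔ D ∣ B * c ∧ D ∣ B * a := by
  refine ⟨fun h => ⟨h.trans (mul_dvd_mul_left B (Int.gcd_dvd_right a c)),
    h.trans (mul_dvd_mul_left B (Int.gcd_dvd_left a c))⟩, fun ⟨hc, ha⟩ => ?_⟩
  rw [Int.gcd_eq_gcd_ab, mul_add, ← mul_assoc, ← mul_assoc]
  exact dvd_add (ha.mul_right _) (hc.mul_right _)

theorem isBezoutDenom_linear_iff {a b c e : ℤ} (ha : a ≠ 0) (hc : c ≠ 0) (hdet : a * e - b * c ≠ 0)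
    (B : ℤ) :
    IsBezoutDenom (C a * X + C b) (C c * X + C e) B ↔
      0 < B ∧ a * e - b * c ∣ B * Int.gcd a c := by
  have hdetQ : (a * e - b * c : ℚ) ≠ 0 := by exact_mod_cast hdet
  have hcof := linear_bezout_iff hdetQ
  have hmap (u v : ℤ) : (C u * X + C v).map (Int.castRingHom ℚ) = C (u : ℚ) * X + C (v : ℚ) := by
    simp
  rw [IsBezoutDenom, hmap, hmap, degree_linear (Int.cast_ne_zero.2 hc),
    degree_linear (Int.cast_ne_zero.2 ha)]
  have hlift (n : ℤ) := exists_map_eq_C_mul_C_div_iff (B := B) (n := n) hdet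
  push_cast at hlift
  rw [dvd_mul_gcd_iff]
  refine and_congr_right fun _ => ⟨?_, ?_⟩
  · rintro ⟨p, q, hp, hq, h, hP, hQ⟩
    obtain ⟨rfl, rfl⟩ := (hcof p q).1 ⟨hp, hq, h⟩
    exact ⟨by simpa using (hlift (-c)).1 (by simpa using hP), (hlift a).1 hQ⟩
  · rintro ⟨hdc, hda⟩
    obtain ⟨hp, hq, h⟩ := (hcof _ _).2 ⟨rfl, rfl⟩
    exact ⟨_, _, hp, hq, h, by simpa using (hlift (-c)).2 (by simpa using hdc), (hlift a).2 hda⟩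

theorem mul_eq_abs_of_isLeast_dvd_mul {D n B : ℤ} (hD : D ≠ 0) (hn : 0 < n) (hnD : n ∣ D)
    (hB : IsLeast {B' : ℤ | 0 < B' ∧ D ∣ B' * n} B) : B * n = |D| := by
  obtain ⟨⟨hBpos, hdvd⟩, hmin⟩ := hB
  have hn_abs : n ∣ |D| := (dvd_abs n D).2 hnD
  have hquot : |D| / n * n = |D| := Int.ediv_mul_cancel hn_abs
  have hcand : |D| / n ∈ {B' : ℤ | 0 < B' ∧ D ∣ B' * n} :=
    ⟨Int.ediv_pos_of_pos_of_dvd (abs_pos.2 hD) hn.le hn_abs, by rw [hquot]; exact self_dvd_abs D⟩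
  refine le_antisymm ?_ (Int.le_of_dvd (by positivity) ((abs_dvd _ _).2 hdvd))
  calc B * n ≤ |D| / n * n := by gcongr; exact hmin hcand
    _ = |D| := hquot

theorem statement_19 (a b c e : ℤ) (ha : a ≠ 0) (hc : c ≠ 0) (hdet : a * e - b * c ≠ 0)
    (f g : Polynomial ℤ)
    (hfe : f = Polynomial.C a * Polynomial.X + Polynomial.C b)
    (hge : g = Polynomial.C c * Polynomial.X + Polynomial.C e)
    (B : ℤ) (hB : IsBezoutDenom f g B)
    (hBmin : ∀ B' : ℤ, IsBezoutDenom f g B' → B ≤ B') :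
    |res f g| = |a * e - b * c| ∧
      B * (Int.gcd a c : ℤ) = |a * e - b * c| ∧
      (Int.gcd a c = 1 → B = |res f g|) := by
  subst hfe hge
  have hres : res (C a * X + C b) (C c * X + C e) = a * e - b * c := by
    rw [res_of_natDegree_eq_one (by compute_degree!) (by compute_degree!)]
    simp only [coeff_add, coeff_C_mul_X, coeff_C]
    simp
  have hleast : IsLeast {B' : ℤ | 0 < B' ∧ a * e - b * c ∣ B' * Int.gcd a c} B := by
    simp_rw [← isBezoutDenom_linear_iff ha hc hdet]
    exact ⟨hB, hBmin⟩
  have hgcd_dvd : (Int.gcd a c : ℤ) ∣ a * e - b * c :=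
    ((Int.gcd_dvd_left a c).mul_right e).sub ((Int.gcd_dvd_right a c).mul_left b)
  have hmul := mul_eq_abs_of_isLeast_dvd_mul hdet
    (by exact_mod_cast Int.gcd_pos_of_ne_zero_left c ha) hgcd_dvd hleast
  refine ⟨by rw [hres], hmul, fun hcop => ?_⟩
  rw [hres, ← hmul, hcop, Nat.cast_one, mul_one]
end
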